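/- arXiv:math/0409348 — 2 statements merged into one kernel-verified Lean document; each statement's English description precedes it below -/
import Mathlib

section
/- For any parameters a₁,…,a₅ ∈ ℂ, the polynomial S = P − U_{a₁,…,a₅} is invariant under the dihedral group D₇ acting on the (x,y)-coordinates: for all x, y, z, w ∈ ℂ one has S(cos(2π/7)·x − sin(2π/7)·y, sin(2π/7)·x + cos(2π/7)·y, z, w) = S(x, y, z, w) and S(x, −y, z, w) = S(x, y, z, w). -/
/-!
Write `x + i y` for the point `(x, y)`. Then `x ^ 2 + y ^ 2` and
`x (x ^ 6 - 21 x ^ 4 y ^ 2 + 35 x ^ 2 y ^ 4 - 7 y ^ 6) = Re ((x + i y) ^ 7)` are the only ways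
in which `S` depends on `x` and `y`. Both are even in `y`, the first is invariant under every
rotation, and the rotation by `2π/7` multiplies `x + i y` by a seventh root of unity, hence
fixes `(x + i y) ^ 7`.
-/

section SeventhPower

variable {R : Type*} [CommRing R]

/-- `septicRe x y` and `septicIm x y` are the real and imaginary parts of `(x + i y) ^ 7`. -/
def septicRe (x y : R) : R :=
  x * (x ^ 6 - 21 * x ^ 4 * y ^ 2 + 35 * x ^ 2 * y ^ 4 - 7 * y ^ 6)

def septicIm (x y : R) : R :=
  7 * x ^ 6 * y - 35 * x ^ 4 * y ^ 3 + 21 * x ^ 2 * y ^ 5 - y ^ 7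

/-- `(c x - s y) + i (s x + c y) = (c + i s) (x + i y)`, and `(c + i s) ^ 7 = 1`. -/
theorem septicRe_rotate {c s : R} (hre : septicRe c s = 1) (him : septicIm c s = 0) (x y : R) :
    septicRe (c * x - s * y) (s * x + c * y) = septicRe x y := by
  linear_combination (norm := (simp only [septicRe, septicIm]; ring))
    septicRe x y * hre - septicIm x y * him

theorem sq_add_sq_rotate {c s : R} (hcs : c ^ 2 + s ^ 2 = 1) (x y : R) :
    (c * x - s * y) ^ 2 + (s * x + c * y) ^ 2 = x ^ 2 + y ^ 2 := by
  linear_combination (x ^ 2 + y ^ 2) * hcs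

end SeventhPower

namespace Complex

theorem septicRe_cos_sin (z : ℂ) : septicRe (cos z) (sin z) = cos (7 * z) := by
  rw [show 7 * z = z + z + z + z + z + z + z by ring]
  simp only [septicRe, cos_add, sin_add]
  ring

theorem septicIm_cos_sin (z : ℂ) : septicIm (cos z) (sin z) = sin (7 * z) := by
  rw [show 7 * z = z + z + z + z + z + z + z by ring]
  simp only [septicIm, cos_add, sin_add]
  ring

theorem seven_mul_two_pi_div_seven : 7 * (2 * π / 7 : ℂ) = 2 * π := by
  ring

end Complex

open Complex in
theorem septicRe_cos_sin_two_pi_div_seven :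
    septicRe ((Real.cos (2 * Real.pi / 7) : ℝ) : ℂ) ((Real.sin (2 * Real.pi / 7) : ℝ) : ℂ) = 1 := by
  push_cast
  rw [septicRe_cos_sin, seven_mul_two_pi_div_seven, cos_two_pi]

open Complex in
theorem septicIm_cos_sin_two_pi_div_seven :
    septicIm ((Real.cos (2 * Real.pi / 7) : ℝ) : ℂ) ((Real.sin (2 * Real.pi / 7) : ℝ) : ℂ) = 0 := by
  push_cast
  rw [septicIm_cos_sin, seven_mul_two_pi_div_seven, sin_two_pi]

/-- For any a₁,…,a₅ ∈ ℂ, the septic S = P − U is invariant under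
the dihedral group D₇ acting on the (x,y)-coordinates: invariance under the
rotation by 2π/7 and under the reflection y ↦ −y. -/
theorem septic_family_dihedral_invariance (a₁ a₂ a₃ a₄ a₅ : ℂ) :
    ∀ x y z w : ℂ,
      (let c : ℂ := (Real.cos (2 * Real.pi / 7) : ℝ)
       let s : ℂ := (Real.sin (2 * Real.pi / 7) : ℝ)
       let P : ℂ → ℂ → ℂ → ℂ := fun x y z =>
         x * (x ^ 6 - 21 * x ^ 4 * y ^ 2 + 35 * x ^ 2 * y ^ 4 - 7 * y ^ 6)
           + 7 * z * ((x ^ 2 + y ^ 2) ^ 3 - 8 * z ^ 2 * (x ^ 2 + y ^ 2) ^ 2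
               + 16 * z ^ 4 * (x ^ 2 + y ^ 2))
           - 64 * z ^ 7
       let U : ℂ → ℂ → ℂ → ℂ → ℂ := fun x y z w =>
         (z + a₅ * w) * (a₁ * z ^ 3 + a₂ * z ^ 2 * w + a₃ * z * w ^ 2
             + a₄ * w ^ 3 + (z + w) * (x ^ 2 + y ^ 2)) ^ 2
       let S : ℂ → ℂ → ℂ → ℂ → ℂ := fun x y z w => P x y z - U x y z w
       S (c * x - s * y) (s * x + c * y) z w = S x y z w ∧
         S x (-y) z w = S x y z w) := by
  intro x y z w
  have hcs : ((Real.cos (2 * Real.pi / 7) : ℝ) : ℂ) ^ 2 + ((Real.sin (2 * Real.pi / 7) : ℝ) : ℂ) ^ 2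
      = 1 := by
    exact_mod_cast Real.cos_sq_add_sin_sq _
  have hq := sq_add_sq_rotate hcs x y
  have hre := septicRe_rotate septicRe_cos_sin_two_pi_div_seven
    septicIm_cos_sin_two_pi_div_seven x y
  unfold septicRe at hre
  refine ⟨?_, ?_⟩
  · simp only
    rw [hq, hre]
  · simp only
    ring
end

section
/- Let ρ ∈ ℂ satisfy ρ³ + 4ρ² − 4ρ − 8 = 0. Then in ℂ[x,z] one has the factorization 16·(x⁷ + 7x⁶z − 56x⁴z³ + 112x²z⁵ − 64z⁷) = (x − z)·(x − ρz)²·(2x + (ρ² + 4ρ)z)²·(2x + (−ρ² − 2ρ + 8)z)²; equivalently this identity holds for all x, z ∈ ℂ. -/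
/-!
The septic is `(x - z)` times the square of the cubic form `x³ + 4x²z - 4xz² - 8z³`, whose
dehomogenisation `t³ + 4t² - 4t - 8` is a cyclic cubic: if `ρ` is one root, the other two are
`-(ρ² + 4ρ)/2` and `(ρ² + 2ρ - 8)/2`, so the cubic form splits into the three linear factors.
-/

section

variable {R : Type*} [CommRing R]

theorem septic_eq_sub_mul_cubic_sq (x z : R) :
    x ^ 7 + 7 * x ^ 6 * z - 56 * x ^ 4 * z ^ 3 + 112 * x ^ 2 * z ^ 5 - 64 * z ^ 7
      = (x - z) * (x ^ 3 + 4 * x ^ 2 * z - 4 * x * z ^ 2 - 8 * z ^ 3) ^ 2 := by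
  ring

theorem linear_factors_eq_four_mul_cubic_of_root {ρ : R}
    (hρ : ρ ^ 3 + 4 * ρ ^ 2 - 4 * ρ - 8 = 0) (x z : R) :
    (x - ρ * z) * (2 * x + (ρ ^ 2 + 4 * ρ) * z) * (2 * x + (-ρ ^ 2 - 2 * ρ + 8) * z)
      = 4 * (x ^ 3 + 4 * x ^ 2 * z - 4 * x * z ^ 2 - 8 * z ^ 3) := by
  linear_combination ((ρ ^ 2 + 2 * ρ - 4) * z ^ 3 - (ρ + 2) * x * z ^ 2) * hρ

end

/-- If ρ³ + 4ρ² − 4ρ − 8 = 0 then for all x, z ∈ ℂ,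
`16·(x⁷ + 7x⁶z − 56x⁴z³ + 112x²z⁵ − 64z⁷)
  = (x − z)·(x − ρz)²·(2x + (ρ² + 4ρ)z)²·(2x + (−ρ² − 2ρ + 8)z)²`. -/
theorem septic_plane_restriction_factorization (ρ : ℂ)
    (hρ : ρ ^ 3 + 4 * ρ ^ 2 - 4 * ρ - 8 = 0) :
    ∀ x z : ℂ,
      16 * (x ^ 7 + 7 * x ^ 6 * z - 56 * x ^ 4 * z ^ 3 + 112 * x ^ 2 * z ^ 5
          - 64 * z ^ 7)
        = (x - z) * (x - ρ * z) ^ 2 * (2 * x + (ρ ^ 2 + 4 * ρ) * z) ^ 2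
            * (2 * x + (-ρ ^ 2 - 2 * ρ + 8) * z) ^ 2 := by
  intro x z
  calc 16 * (x ^ 7 + 7 * x ^ 6 * z - 56 * x ^ 4 * z ^ 3 + 112 * x ^ 2 * z ^ 5 - 64 * z ^ 7)
      = (x - z) * (4 * (x ^ 3 + 4 * x ^ 2 * z - 4 * x * z ^ 2 - 8 * z ^ 3)) ^ 2 := by
        rw [septic_eq_sub_mul_cubic_sq]; ring
    _ = (x - z) * ((x - ρ * z) * (2 * x + (ρ ^ 2 + 4 * ρ) * z)
          * (2 * x + (-ρ ^ 2 - 2 * ρ + 8) * z)) ^ 2 := by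
        rw [linear_factors_eq_four_mul_cubic_of_root hρ]
    _ = (x - z) * (x - ρ * z) ^ 2 * (2 * x + (ρ ^ 2 + 4 * ρ) * z) ^ 2
          * (2 * x + (-ρ ^ 2 - 2 * ρ + 8) * z) ^ 2 := by
        ring
end
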